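/- (Lemma 3.3) For every real β with 1 < β < 2, the series ∑_{k=0}^{∞} |ω_k^{(β)}| converges and satisfies ∑_{k=0}^{∞} |ω_k^{(β)}| ≤ −2·ω_1^{(β)} + |ω_2^{(β)}| − ω_2^{(β)} < ∞; consequently the generating function p(θ) = ∑_{k=−1}^{∞} ω_{k+1}^{(β)}·(e_1·e^{ikθ} + e_2·e^{−ikθ}) of the Toeplitz family (K_N) is in the Wiener class (its coefficient sequence is absolutely summable). -/

import Mathlib

open scoped Matrix

/-- The coefficients `g_k^{(β)}`. -/
noncomputable def gcoef (β : ℝ) : ℕ → ℝ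
  | 0 => 1
  | k + 1 => (1 - (β + 1) / ((k : ℝ) + 1)) * gcoef β k

/-- The WSGD coefficients `ω_k^{(β)}`. -/
noncomputable def w (β : ℝ) : ℕ → ℝ
  | 0 => β / 2 * gcoef β 0
  | k + 1 => β / 2 * gcoef β (k + 1) + (2 - β) / 2 * gcoef β k

/-!
The `g_k` are the Taylor coefficients of `(1 - z)^(β+1)`, so their partial sums `G_N` are those of
`(1 - z)^β`; they satisfy `G_{N+1} = (1 - β/(N+1)) G_N` and are `≤ 0` for `N ≥ 1` when `1 ≤ β ≤ 2`.
The partial sums of `ω` are nonnegative combinations of two consecutive `G_N`, hence `≤ 0` from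
three terms on. Since `ω_0 ≥ 0`, `ω_1 ≤ 0` and `ω_k ≥ 0` for `k ≥ 3`, from three terms on a partial sum
of `|ω_k|` exceeds that of `ω_k` by exactly `-2 ω_1 + |ω_2| - ω_2`.
The Wiener-class statement follows because both halves of the symmetric coefficient sequence are
reindexings of `ω` along maps injective on their supports.
-/

open Finset Set

theorem Summable.ite_comp_of_injOn {ι κ α : Type*} [AddCommGroup α] [UniformSpace α]
    [IsUniformAddGroup α] [CompleteSpace α] {f : ι → α} (hf : Summable f) {p : κ → Prop}
    [DecidablePred p] {φ : κ → ι} (hφ : InjOn φ {k | p k}) :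
    Summable fun k => if p k then f (φ k) else 0 := by
  have h : Summable ({k | p k}.indicator (f ∘ φ)) :=
    summable_subtype_iff_indicator.mp (hf.comp_injective hφ.injective)
  convert h using 2 with k
  simp only [Set.indicator_apply, Set.mem_ofPred_eq, Function.comp_apply]

noncomputable def gcoefSum (β : ℝ) (N : ℕ) : ℝ := ∑ k ∈ range (N + 1), gcoef β k

section

variable {β : ℝ}

theorem gcoef_succ (β : ℝ) (k : ℕ) :
    gcoef β (k + 1) = (1 - (β + 1) / ((k : ℝ) + 1)) * gcoef β k := rfl

theorem w_succ (β : ℝ) (k : ℕ) :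
    w β (k + 1) = β / 2 * gcoef β (k + 1) + (2 - β) / 2 * gcoef β k := rfl

theorem gcoefSum_succ_eq_add (β : ℝ) (N : ℕ) :
    gcoefSum β (N + 1) = gcoefSum β N + gcoef β (N + 1) :=
  sum_range_succ _ _

theorem gcoef_succ_eq_neg_mul_gcoefSum (β : ℝ) (N : ℕ) :
    gcoef β (N + 1) = -(β / ((N : ℝ) + 1)) * gcoefSum β N := by
  induction N with
  | zero => simp [gcoefSum, gcoef]
  | succ n ih =>
    rw [gcoef_succ, ih, gcoefSum_succ_eq_add, ih]
    push_cast
    field_simp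
    ring

theorem gcoefSum_succ (β : ℝ) (N : ℕ) :
    gcoefSum β (N + 1) = (1 - β / ((N : ℝ) + 1)) * gcoefSum β N := by
  rw [gcoefSum_succ_eq_add, gcoef_succ_eq_neg_mul_gcoefSum]
  ring

theorem gcoefSum_succ_nonpos (hβ1 : 1 ≤ β) (hβ2 : β ≤ 2) (N : ℕ) : gcoefSum β (N + 1) ≤ 0 := by
  induction N with
  | zero =>
    rw [gcoefSum_succ]
    norm_num [gcoefSum, gcoef]
    linarith
  | succ n ih =>
    rw [gcoefSum_succ]
    refine mul_nonpos_of_nonneg_of_nonpos ?_ ih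
    rw [sub_nonneg, div_le_one (by positivity)]
    push_cast
    linarith [(n.cast_nonneg : (0 : ℝ) ≤ n)]

theorem gcoef_nonneg (hβ1 : 1 ≤ β) (hβ2 : β ≤ 2) {k : ℕ} (hk : 2 ≤ k) : 0 ≤ gcoef β k := by
  induction k, hk using Nat.le_induction with
  | base => norm_num [gcoef]; nlinarith
  | succ n hn ih =>
    rw [gcoef_succ]
    refine mul_nonneg ?_ ih
    rw [sub_nonneg, div_le_one (by positivity)]
    have : (2 : ℝ) ≤ n := by exact_mod_cast hn
    linarith

theorem w_zero_nonneg (hβ : 0 ≤ β) : 0 ≤ w β 0 := by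
  simp only [w, gcoef]
  linarith

theorem w_one_nonpos (hβ : 1 ≤ β) : w β 1 ≤ 0 := by
  norm_num [w, gcoef]
  nlinarith

theorem w_nonneg (hβ1 : 1 ≤ β) (hβ2 : β ≤ 2) {k : ℕ} (hk : 3 ≤ k) : 0 ≤ w β k := by
  obtain ⟨j, rfl⟩ : ∃ j, k = j + 1 := ⟨k - 1, by omega⟩
  rw [w_succ]
  have := gcoef_nonneg hβ1 hβ2 (k := j + 1) (by omega)
  have := gcoef_nonneg hβ1 hβ2 (k := j) (by omega)
  have : 0 ≤ 2 - β := by linarith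
  positivity

theorem sum_range_w (β : ℝ) (N : ℕ) :
    ∑ k ∈ range (N + 2), w β k = β / 2 * gcoefSum β (N + 1) + (2 - β) / 2 * gcoefSum β N := by
  rw [sum_range_succ', gcoefSum, gcoefSum, sum_range_succ' (gcoef β)]
  simp only [w_succ, sum_add_distrib, ← mul_sum]
  simp only [w]
  ring

theorem sum_range_w_nonpos (hβ1 : 1 ≤ β) (hβ2 : β ≤ 2) (N : ℕ) :
    ∑ k ∈ range (N + 3), w β k ≤ 0 := by
  rw [sum_range_w]
  have h1 := gcoefSum_succ_nonpos hβ1 hβ2 (N + 1)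
  have h2 := gcoefSum_succ_nonpos hβ1 hβ2 N
  have : 0 ≤ 2 - β := by linarith
  nlinarith

theorem sum_range_abs_w_le (hβ1 : 1 ≤ β) (hβ2 : β ≤ 2) (n : ℕ) :
    ∑ k ∈ range n, |w β k| ≤ -2 * w β 1 + |w β 2| - w β 2 := by
  have hdefect : ∑ k ∈ range (3 + n), (|w β k| - w β k) = -2 * w β 1 + |w β 2| - w β 2 := by
    have htail : ∀ k, |w β (3 + k)| - w β (3 + k) = 0 := fun k => by
      rw [abs_of_nonneg (w_nonneg hβ1 hβ2 (by omega)), sub_self]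
    rw [sum_range_add]
    simp only [htail, sum_const_zero, add_zero, sum_range_succ, range_zero, sum_empty,
      abs_of_nonneg (w_zero_nonneg (by linarith : (0 : ℝ) ≤ β)), abs_of_nonpos (w_one_nonpos hβ1)]
    ring
  calc ∑ k ∈ range n, |w β k|
      ≤ ∑ k ∈ range (3 + n), |w β k| :=
        sum_le_sum_of_subset_of_nonneg (range_subset_range.2 (by omega))
          fun _ _ _ => abs_nonneg _
    _ = ∑ k ∈ range (n + 3), w β k + ∑ k ∈ range (3 + n), (|w β k| - w β k) := by
        rw [sum_sub_distrib, add_comm n 3]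
        ring
    _ ≤ -2 * w β 1 + |w β 2| - w β 2 := by
        rw [hdefect]
        linarith [sum_range_w_nonpos hβ1 hβ2 n]

end

theorem wsgd_abs_summable_wiener_general (β e1 e2 : ℝ) (hβ1 : 1 < β) (hβ2 : β < 2) :
    Summable (fun k : ℕ => |w β k|) ∧
    (∑' k : ℕ, |w β k|) ≤ -2 * w β 1 + |w β 2| - w β 2 ∧
    Summable (fun k : ℤ =>
      |(if -1 ≤ k then e1 * w β (k + 1).toNat else 0) +
        (if k ≤ 1 then e2 * w β (1 - k).toNat else 0)|) := by
  have hpartial := sum_range_abs_w_le hβ1.le hβ2.le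
  have habs : Summable fun k => |w β k| :=
    summable_of_sum_range_le (fun _ => abs_nonneg _) hpartial
  refine ⟨habs, Real.tsum_le_of_sum_range_le (fun _ => abs_nonneg _) hpartial, ?_⟩
  have hw : Summable (w β) := habs.of_abs
  have hpos : Summable fun k : ℤ => if -1 ≤ k then e1 * w β (k + 1).toNat else 0 :=
    (hw.mul_left e1).ite_comp_of_injOn (φ := fun k : ℤ => (k + 1).toNat)
      fun a ha b hb hab => by simp only [Set.mem_ofPred_eq] at ha hb hab; omega
  have hneg : Summable fun k : ℤ => if k ≤ 1 then e2 * w β (1 - k).toNat else 0 :=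
    (hw.mul_left e2).ite_comp_of_injOn (φ := fun k : ℤ => (1 - k).toNat)
      fun a ha b hb hab => by simp only [Set.mem_ofPred_eq] at ha hb hab; omega
  exact (hpos.add hneg).abs

theorem wsgd_abs_summable_wiener (β e1 e2 : ℝ) (hβ1 : 1 < β) (hβ2 : β < 2)
    (he1 : 0 < e1) (he2 : 0 < e2) :
    Summable (fun k : ℕ => |w β k|) ∧
    (∑' k : ℕ, |w β k|) ≤ -2 * w β 1 + |w β 2| - w β 2 ∧
    Summable (fun k : ℤ =>
      |(if -1 ≤ k then e1 * w β (k + 1).toNat else 0) +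
        (if k ≤ 1 then e2 * w β (1 - k).toNat else 0)|) :=
  wsgd_abs_summable_wiener_general β e1 e2 hβ1 hβ2
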